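/- arXiv:1211.1424 — 13 statements merged into one kernel-verified Lean document; each statement's English description precedes it below -/
import Mathlib

section
/- For k ≥ 1 and f ∈ L²(0,1), the solution u of the Helmholtz boundary value problem u'' + k²u = -f, u(0)=0, u'(1) - iku(1) = 0 satisfies ‖u‖_{L²} ≤ k⁻¹ ‖f‖_{L²}, ‖u'‖_{L²} ≤ ‖f‖_{L²}, and ‖u''‖_{L²} ≤ (1+k) ‖f‖_{L²}. -/
/-!
With `c = i k` the Helmholtz operator factors as `d²/dx² + k² = (d/dx + c) (d/dx - c)`, so the
homogeneous impedance problem only has the trivial solution and `u` is given by its Green's function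
`G`. Since `|G| ≤ 1 / k` and `|∂ₓ G| ≤ 1`, this gives `|u| ≤ ‖f‖₁ / k` and `|u'| ≤ ‖f‖₁` pointwise,
and `‖f‖₁ ≤ ‖f‖₂` on the unit interval. The bound on `u''` then follows from `u'' = -f - k² u`.
-/

open MeasureTheory Complex

theorem eq_zero_of_hasDerivAt_const_mul {c : ℂ} {y : ℝ → ℂ} (hy : ∀ x, HasDerivAt y (c * y x) x)
    {a : ℝ} (ha : y a = 0) (x : ℝ) : y x = 0 := by
  have hconst : ∀ t : ℝ, HasDerivAt (fun s : ℝ => exp (-(c * s)) * y s) 0 t := fun t => by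
    have he : HasDerivAt (fun s : ℝ => -(c * s)) (-c) t := by
      simpa using ((hasDerivAt_id t).ofReal_comp.const_mul c).fun_neg
    exact (he.cexp.mul (hy t)).congr_deriv (by ring)
  have := is_const_of_deriv_eq_zero (fun t => (hconst t).differentiableAt)
    (fun t => (hconst t).deriv) x a
  simpa [ha, exp_ne_zero] using this

/-- `z' - c z` solves `w' = -c w` with `w 1 = 0`, hence vanishes; then `z' = c z` with `z 0 = 0`. -/
theorem eq_zero_of_hasDerivAt_sq_mul_of_impedance {c : ℂ} {z z' : ℝ → ℂ}
    (hz : ∀ x, HasDerivAt z (z' x) x) (hz' : ∀ x, HasDerivAt z' (c ^ 2 * z x) x)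
    (h0 : z 0 = 0) (h1 : z' 1 = c * z 1) (x : ℝ) : z x = 0 := by
  have hw : ∀ x, z' x - c * z x = 0 :=
    eq_zero_of_hasDerivAt_const_mul (c := -c) (a := 1)
      (fun x => ((hz' x).sub ((hz x).const_mul c)).congr_deriv (by ring)) (by rw [h1, sub_self])
  exact eq_zero_of_hasDerivAt_const_mul (c := c)
    (fun x => (hz x).congr_deriv (by linear_combination hw x)) h0 x

instance isProbabilityMeasure_restrict_Ioo_zero_one :
    IsProbabilityMeasure (volume.restrict (Set.Ioo (0 : ℝ) 1)) :=
  ⟨by simp⟩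

theorem eLpNorm_le_ofReal_mul_eLpNorm_of_norm_le_integral {α E F : Type*} [MeasurableSpace α]
    {μ : Measure α} [IsProbabilityMeasure μ] [NormedAddCommGroup E] [NormedAddCommGroup F]
    {f : α → E} {g : α → F} {p : ENNReal} (hp : 1 ≤ p) (hg : Integrable g μ) {C : ℝ} (hC : 0 ≤ C)
    (hf : ∀ᵐ x ∂μ, ‖f x‖ ≤ C * ∫ y, ‖g y‖ ∂μ) :
    eLpNorm f p μ ≤ ENNReal.ofReal C * eLpNorm g p μ :=
  calc eLpNorm f p μ ≤ ENNReal.ofReal (C * ∫ y, ‖g y‖ ∂μ) := by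
        simpa using eLpNorm_le_of_ae_bound (p := p) hf
    _ = ENNReal.ofReal C * eLpNorm g 1 μ := by
        rw [ENNReal.ofReal_mul hC, ofReal_integral_norm_eq_lintegral_enorm hg,
          eLpNorm_one_eq_lintegral_enorm]
    _ ≤ ENNReal.ofReal C * eLpNorm g p μ := by
        gcongr
        exact eLpNorm_le_eLpNorm_of_exponent_le hp hg.aestronglyMeasurable

theorem eLpNorm_restrict_Ioo_le_of_norm_le_intervalIntegral {E F : Type*} [NormedAddCommGroup E]
    [NormedAddCommGroup F] {f : ℝ → E} {g : ℝ → F} {p : ENNReal} (hp : 1 ≤ p) (hg : Continuous g)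
    {C : ℝ} (hC : 0 ≤ C) (hf : ∀ x ∈ Set.Icc (0 : ℝ) 1, ‖f x‖ ≤ C * ∫ t in (0 : ℝ)..1, ‖g t‖) :
    eLpNorm f p (volume.restrict (Set.Ioo (0 : ℝ) 1)) ≤
      ENNReal.ofReal C * eLpNorm g p (volume.restrict (Set.Ioo (0 : ℝ) 1)) := by
  refine eLpNorm_le_ofReal_mul_eLpNorm_of_norm_le_integral hp
    (hg.integrableOn_Icc.mono_set Set.Ioo_subset_Icc_self) hC
    (ae_restrict_of_forall_mem measurableSet_Ioo fun x hx => ?_)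
  rw [← integral_Ioc_eq_integral_Ioo, ← intervalIntegral.integral_of_le zero_le_one]
  exact hf x (Set.Ioo_subset_Icc_self hx)

theorem eLpNorm_sub_sq_smul_le {α : Type*} [MeasurableSpace α] {μ : Measure α} {p : ENNReal}
    (hp : 1 ≤ p) {g u : α → ℂ} (hg : AEStronglyMeasurable g μ) (hu : AEStronglyMeasurable u μ)
    {k : ℝ} (hk : 0 < k) {N : ENNReal} (hgN : eLpNorm g p μ ≤ N)
    (huN : eLpNorm u p μ ≤ ENNReal.ofReal k⁻¹ * N) :
    eLpNorm (g - (k : ℂ) ^ 2 • u) p μ ≤ ENNReal.ofReal (1 + k) * N :=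
  calc eLpNorm (g - (k : ℂ) ^ 2 • u) p μ ≤ eLpNorm g p μ + ‖(k : ℂ) ^ 2‖ₑ * eLpNorm u p μ := by
        rw [← eLpNorm_const_smul]
        exact eLpNorm_sub_le hg (hu.const_smul _) hp
    _ ≤ N + ENNReal.ofReal (k ^ 2) * (ENNReal.ofReal k⁻¹ * N) := by
        rw [← ofReal_norm, norm_pow, norm_real, Real.norm_of_nonneg hk.le]
        gcongr
    _ = ENNReal.ofReal (1 + k) * N := by
        rw [← mul_assoc, ← ENNReal.ofReal_mul (by positivity), ENNReal.ofReal_add zero_le_one hk.le,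
          ENNReal.ofReal_one, add_mul, one_mul, sq, mul_assoc, mul_inv_cancel₀ hk.ne', mul_one]

theorem hasDerivAt_exp_mul_I (k x : ℝ) :
    HasDerivAt (fun t : ℝ => exp (k * t * I)) (k * I * exp (k * x * I)) x := by
  have h : HasDerivAt (fun t : ℝ => (k : ℂ) * t * I) (k * I) x := by
    simpa using ((hasDerivAt_id x).ofReal_comp.const_mul (k : ℂ)).mul_const I
  simpa [mul_comm] using h.cexp

theorem hasDerivAt_sin_mul (k x : ℝ) :
    HasDerivAt (fun t : ℝ => (Real.sin (k * t) : ℂ)) (k * Real.cos (k * x)) x := by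
  simpa [mul_comm] using (((hasDerivAt_id x).const_mul k).sin).ofReal_comp

theorem hasDerivAt_cos_mul (k x : ℝ) :
    HasDerivAt (fun t : ℝ => (Real.cos (k * t) : ℂ)) (-(k * Real.sin (k * x))) x := by
  simpa [mul_comm] using (((hasDerivAt_id x).const_mul k).cos).ofReal_comp

namespace Helmholtz

noncomputable def greenLeft (k : ℝ) (g : ℝ → ℂ) (x : ℝ) : ℂ :=
  ∫ t in (0 : ℝ)..x, Real.sin (k * t) * g t

noncomputable def greenRight (k : ℝ) (g : ℝ → ℂ) (x : ℝ) : ℂ :=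
  ∫ t in x..1, exp (k * t * I) * g t

/-- `sol k g x = ∫₀¹ G(x, t) g(t) dt` for the Green's function
`G(x, t) = sin (k min(x, t)) e^{i k max(x, t)} / k`, with the integral split at `t = x`. -/
noncomputable def sol (k : ℝ) (g : ℝ → ℂ) (x : ℝ) : ℂ :=
  (exp (k * x * I) * greenLeft k g x + Real.sin (k * x) * greenRight k g x) / k

noncomputable def solDeriv (k : ℝ) (g : ℝ → ℂ) (x : ℝ) : ℂ :=
  I * exp (k * x * I) * greenLeft k g x + Real.cos (k * x) * greenRight k g x

variable {k : ℝ} {g : ℝ → ℂ}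

theorem hasDerivAt_greenLeft (hg : Continuous g) (x : ℝ) :
    HasDerivAt (greenLeft k g) (Real.sin (k * x) * g x) x :=
  ((by fun_prop : Continuous fun t : ℝ => (Real.sin (k * t) : ℂ) * g t).integral_hasStrictDerivAt
    0 x).hasDerivAt

theorem hasDerivAt_greenRight (hg : Continuous g) (x : ℝ) :
    HasDerivAt (greenRight k g) (-(exp (k * x * I) * g x)) x := by
  have hcont : Continuous fun t : ℝ => exp (k * t * I) * g t := by fun_prop
  exact intervalIntegral.integral_hasDerivAt_left (hcont.intervalIntegrable _ _)
    (hcont.stronglyMeasurableAtFilter _ _) hcont.continuousAt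

theorem hasDerivAt_sol (hk : k ≠ 0) (hg : Continuous g) (x : ℝ) :
    HasDerivAt (sol k g) (solDeriv k g x) x := by
  have H := (((hasDerivAt_exp_mul_I k x).mul (hasDerivAt_greenLeft (k := k) hg x)).add
    ((hasDerivAt_sin_mul k x).mul (hasDerivAt_greenRight (k := k) hg x))).div_const (k : ℂ)
  refine H.congr_deriv ?_
  have hk' : (k : ℂ) ≠ 0 := ofReal_ne_zero.mpr hk
  simp only [solDeriv]
  field_simp
  ring

theorem hasDerivAt_solDeriv (hk : k ≠ 0) (hg : Continuous g) (x : ℝ) :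
    HasDerivAt (solDeriv k g) (-(k : ℂ) ^ 2 * sol k g x - g x) x := by
  have H := (((hasDerivAt_exp_mul_I k x).const_mul I).mul (hasDerivAt_greenLeft (k := k) hg x)).add
    ((hasDerivAt_cos_mul k x).mul (hasDerivAt_greenRight (k := k) hg x))
  refine H.congr_deriv ?_
  have hexp : exp (k * x * I) * (Real.cos (k * x) - Real.sin (k * x) * I) = 1 := by
    rw [← ofReal_mul, exp_mul_I, ← ofReal_cos, ← ofReal_sin]
    have hpyth : (Real.sin (k * x) : ℂ) ^ 2 + (Real.cos (k * x) : ℂ) ^ 2 = 1 := by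
      exact_mod_cast Real.sin_sq_add_cos_sq (k * x)
    linear_combination (-1 : ℂ) * (Real.sin (k * x) : ℂ) ^ 2 * I_sq + hpyth
  have hk' : (k : ℂ) * (k : ℂ)⁻¹ = 1 := mul_inv_cancel₀ (ofReal_ne_zero.mpr hk)
  simp only [sol]
  linear_combination (k * exp (k * x * I) * greenLeft k g x) * I_sq - g x * hexp
    + (k * (exp (k * x * I) * greenLeft k g x + Real.sin (k * x) * greenRight k g x)) * hk'

theorem sol_zero : sol k g 0 = 0 := by
  simp [sol, greenLeft]

theorem solDeriv_one (hk : k ≠ 0) : solDeriv k g 1 = I * k * sol k g 1 := by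
  have hk' : (k : ℂ) ≠ 0 := ofReal_ne_zero.mpr hk
  simp only [solDeriv, sol, greenRight, intervalIntegral.integral_same]
  field_simp
  ring

theorem eq_sol (hk : k ≠ 0) (hg : Continuous g) {u : ℝ → ℂ} (hu : ContDiff ℝ 2 u)
    (heq : ∀ x, deriv (deriv u) x + (k : ℂ) ^ 2 * u x = -g x) (h0 : u 0 = 0)
    (h1 : deriv u 1 - I * k * u 1 = 0) : u = sol k g := by
  have hdu : ∀ x, HasDerivAt u (deriv u x) x :=
    fun x => (hu.differentiable (by norm_num) x).hasDerivAt
  have hddu : ∀ x, HasDerivAt (deriv u) (deriv (deriv u) x) x :=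
    fun x => (hu.differentiable_deriv_two x).hasDerivAt
  funext x
  refine sub_eq_zero.mp (eq_zero_of_hasDerivAt_sq_mul_of_impedance (c := I * k)
    (z' := deriv u - solDeriv k g) (fun x => (hdu x).sub (hasDerivAt_sol hk hg x))
    (fun x => ((hddu x).sub (hasDerivAt_solDeriv hk hg x)).congr_deriv ?_) ?_ ?_ x)
  · simp only [Pi.sub_apply]
    linear_combination heq x + (k ^ 2 * (sol k g x - u x)) * I_sq
  · simp [h0, sol_zero]
  · simp only [Pi.sub_apply, solDeriv_one hk]
    linear_combination h1

theorem norm_greenLeft_add_norm_greenRight_le (hg : IntervalIntegrable g volume 0 1) {x : ℝ}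
    (hx : x ∈ Set.Icc (0 : ℝ) 1) :
    ‖greenLeft k g x‖ + ‖greenRight k g x‖ ≤ ∫ t in (0 : ℝ)..1, ‖g t‖ := by
  have h0x : IntervalIntegrable (fun t => ‖g t‖) volume 0 x :=
    hg.norm.mono_set (Set.uIcc_subset_uIcc_left (by simpa [Set.uIcc_of_le zero_le_one] using hx))
  have hx1 : IntervalIntegrable (fun t => ‖g t‖) volume x 1 :=
    hg.norm.mono_set (Set.uIcc_subset_uIcc_right (by simpa [Set.uIcc_of_le zero_le_one] using hx))
  rw [← intervalIntegral.integral_add_adjacent_intervals h0x hx1]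
  gcongr
  · refine intervalIntegral.norm_integral_le_of_norm_le hx.1 (ae_of_all _ fun t _ => ?_) h0x
    rw [norm_mul, norm_real, Real.norm_eq_abs]
    exact mul_le_of_le_one_left (norm_nonneg _) (Real.abs_sin_le_one _)
  · refine intervalIntegral.norm_integral_le_of_norm_le hx.2 (ae_of_all _ fun t _ => ?_) hx1
    rw [norm_mul, ← ofReal_mul, norm_exp_ofReal_mul_I, one_mul]

theorem norm_sol_le (hk : 0 < k) (hg : IntervalIntegrable g volume 0 1) {x : ℝ}
    (hx : x ∈ Set.Icc (0 : ℝ) 1) : ‖sol k g x‖ ≤ k⁻¹ * ∫ t in (0 : ℝ)..1, ‖g t‖ := by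
  rw [sol, norm_div, norm_real, Real.norm_of_nonneg hk.le, inv_mul_eq_div]
  gcongr
  refine (norm_add_le _ _).trans ?_
  rw [norm_mul, norm_mul, ← ofReal_mul, norm_exp_ofReal_mul_I, one_mul, norm_real, Real.norm_eq_abs]
  refine le_trans ?_ (norm_greenLeft_add_norm_greenRight_le (k := k) hg hx)
  gcongr
  exact mul_le_of_le_one_left (norm_nonneg _) (Real.abs_sin_le_one _)

theorem norm_solDeriv_le (hg : IntervalIntegrable g volume 0 1) {x : ℝ}
    (hx : x ∈ Set.Icc (0 : ℝ) 1) : ‖solDeriv k g x‖ ≤ ∫ t in (0 : ℝ)..1, ‖g t‖ := by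
  refine (norm_add_le _ _).trans ?_
  rw [norm_mul, norm_mul, norm_I, one_mul, ← ofReal_mul, norm_exp_ofReal_mul_I, one_mul, norm_mul,
    norm_real, Real.norm_eq_abs]
  refine le_trans ?_ (norm_greenLeft_add_norm_greenRight_le (k := k) hg hx)
  gcongr
  exact mul_le_of_le_one_left (norm_nonneg _) (Real.abs_cos_le_one _)

end Helmholtz

theorem helmholtz_stability_estimates_general
    (k : ℝ) (hk : 1 ≤ k)
    (f u : ℝ → ℂ)
    (hreg : ContDiff ℝ 2 u)
    (heq : ∀ x ∈ Set.Ioo (0:ℝ) 1, deriv (deriv u) x + (k:ℂ)^2 * u x = - f x)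
    (hbc0 : u 0 = 0)
    (hbc1 : deriv u 1 - Complex.I * (k:ℂ) * u 1 = 0) :
    eLpNorm u 2 (volume.restrict (Set.Ioo (0:ℝ) 1)) ≤
      ENNReal.ofReal k⁻¹ * eLpNorm f 2 (volume.restrict (Set.Ioo (0:ℝ) 1)) ∧
    eLpNorm (deriv u) 2 (volume.restrict (Set.Ioo (0:ℝ) 1)) ≤
      eLpNorm f 2 (volume.restrict (Set.Ioo (0:ℝ) 1)) ∧
    eLpNorm (deriv (deriv u)) 2 (volume.restrict (Set.Ioo (0:ℝ) 1)) ≤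
      ENNReal.ofReal (1 + k) * eLpNorm f 2 (volume.restrict (Set.Ioo (0:ℝ) 1)) := by
  have hk0 : 0 < k := one_pos.trans_le hk
  set μ := volume.restrict (Set.Ioo (0:ℝ) 1)
  -- `g` is the continuous right-hand side on all of `ℝ` that agrees with `f` on `(0, 1)`.
  set g : ℝ → ℂ := fun x => -(deriv (deriv u) x + (k : ℂ) ^ 2 * u x)
  have hg : Continuous g := by
    have := (hreg.deriv' (n := 1)).continuous_deriv_one
    fun_prop
  have hfg : eLpNorm f 2 μ = eLpNorm g 2 μ := eLpNorm_congr_ae <|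
    ae_restrict_of_forall_mem measurableSet_Ioo fun x hx => by simp only [g, heq x hx, neg_neg]
  have hu : u = Helmholtz.sol k g :=
    Helmholtz.eq_sol hk0.ne' hg hreg (fun x => by simp [g]) hbc0 hbc1
  have hu' : deriv u = Helmholtz.solDeriv k g := by
    rw [hu]; funext x; exact (Helmholtz.hasDerivAt_sol hk0.ne' hg x).deriv
  have hu_le : eLpNorm u 2 μ ≤ ENNReal.ofReal k⁻¹ * eLpNorm f 2 μ := by
    rw [hfg, hu]
    exact eLpNorm_restrict_Ioo_le_of_norm_le_intervalIntegral one_le_two hg (inv_nonneg.2 hk0.le)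
      fun x hx => Helmholtz.norm_sol_le hk0 (hg.intervalIntegrable 0 1) hx
  have hu'_le : eLpNorm (deriv u) 2 μ ≤ eLpNorm f 2 μ := by
    simpa [hfg, hu'] using
      eLpNorm_restrict_Ioo_le_of_norm_le_intervalIntegral one_le_two hg zero_le_one fun x hx => by
        simpa using Helmholtz.norm_solDeriv_le (k := k) (hg.intervalIntegrable 0 1) hx
  have hu'' : deriv (deriv u) = -g - (k : ℂ) ^ 2 • u := by
    funext x; simp only [g, Pi.sub_apply, Pi.neg_apply, Pi.smul_apply, smul_eq_mul]; ring
  refine ⟨hu_le, hu'_le, ?_⟩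
  rw [hu'']
  exact eLpNorm_sub_sq_smul_le one_le_two hg.neg.aestronglyMeasurable
    hreg.continuous.aestronglyMeasurable hk0 (by rw [eLpNorm_neg, hfg]) hu_le

theorem helmholtz_stability_estimates
    (k : ℝ) (hk : 1 ≤ k)
    (f u : ℝ → ℂ)
    (hf : MemLp f 2 (volume.restrict (Set.Ioo (0:ℝ) 1)))
    (hreg : ContDiff ℝ 2 u)
    (heq : ∀ x ∈ Set.Ioo (0:ℝ) 1, deriv (deriv u) x + (k:ℂ)^2 * u x = - f x)
    (hbc0 : u 0 = 0)
    (hbc1 : deriv u 1 - Complex.I * (k:ℂ) * u 1 = 0) :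
    eLpNorm u 2 (volume.restrict (Set.Ioo (0:ℝ) 1)) ≤
      ENNReal.ofReal k⁻¹ * eLpNorm f 2 (volume.restrict (Set.Ioo (0:ℝ) 1)) ∧
    eLpNorm (deriv u) 2 (volume.restrict (Set.Ioo (0:ℝ) 1)) ≤
      eLpNorm f 2 (volume.restrict (Set.Ioo (0:ℝ) 1)) ∧
    eLpNorm (deriv (deriv u)) 2 (volume.restrict (Set.Ioo (0:ℝ) 1)) ≤
      ENNReal.ofReal (1 + k) * eLpNorm f 2 (volume.restrict (Set.Ioo (0:ℝ) 1)) :=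
  helmholtz_stability_estimates_general k hk f u hreg heq hbc0 hbc1
end

section
/- Let 0 < t ≤ 1 and -1/6 ≤ γ ≤ 1/6 with γ ≠ 0. Then both roots of the quadratic equation 2γ c² - (4γ + 1 + t²/6) c + 2γ + 1 - t²/3 = 0 in c are real, and exactly one root c⁻ satisfies |c⁻| ≤ 1 while the other root c⁺ satisfies |c⁺| ≥ 1; explicitly c^± = (4γ + 1 + t²/6 ± √((1+t²/6)² + 4γt²)) / (4γ). -/
/-!
Write `p(c) = 2γc² - (4γ + 1 + t²/6)c + 2γ + 1 - t²/3`. Its discriminant is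
`(1 + t²/6)² + 4γt² ≥ (1 - t²/6)² ≥ 0`, so `c^±` are its two real roots, and
`p(1) = -t²/2 < 0 < 8γ + 2 - t²/6 = p(-1)`. A real quadratic that changes sign on `[-1, 1]`
has exactly one root inside `(-1, 1)`; writing `p(c) = 2γ(c - c⁻)(c - c⁺)` and comparing the
signs of `p(±1)` for either sign of `γ` shows that it is `c⁻`.
-/

theorem quadratic_eq_mul_sub_mul_sub {K : Type*} [Field K] [NeZero (2 : K)] {a b c s : K}
    (ha : a ≠ 0) (h : discrim a b c = s * s) (x : K) :
    a * (x * x) + b * x + c = a * (x - (-b - s) / (2 * a)) * (x - (-b + s) / (2 * a)) := by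
  rw [discrim] at h
  field_simp
  linear_combination -h

section LinearOrderedField

variable {K : Type*} [Field K] [LinearOrder K] [IsStrictOrderedRing K]

theorem abs_lt_one_lt_abs_of_mul_sub_mul_sub {a r₁ r₂ : K} (ha : a ≠ 0)
    (horder : 0 ≤ a * (r₂ - r₁)) (h1 : a * (1 - r₁) * (1 - r₂) < 0)
    (hm1 : 0 < a * (-1 - r₁) * (-1 - r₂)) :
    |r₁| < 1 ∧ 1 < |r₂| := by
  rw [mul_assoc] at h1 hm1
  rcases ha.lt_or_gt with hneg | hpos
  · have hr : r₂ ≤ r₁ := by nlinarith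
    have q1 : 0 < (1 - r₁) * (1 - r₂) := pos_of_mul_neg_right h1 hneg.le
    have qm1 : (-1 - r₁) * (-1 - r₂) < 0 := neg_of_mul_pos_right hm1 hneg.le
    have hr₂ : r₂ < -1 := by nlinarith
    have hr₁ : -1 < r₁ := by nlinarith
    exact ⟨abs_lt.2 ⟨hr₁, by nlinarith⟩, lt_abs.2 (Or.inr (by linarith))⟩
  · have hr : r₁ ≤ r₂ := by nlinarith
    have q1 : (1 - r₁) * (1 - r₂) < 0 := neg_of_mul_neg_right h1 hpos.le
    have qm1 : 0 < (-1 - r₁) * (-1 - r₂) := pos_of_mul_pos_right hm1 hpos.le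
    have hr₂ : 1 < r₂ := by nlinarith
    have hr₁ : r₁ < 1 := by nlinarith
    exact ⟨abs_lt.2 ⟨by nlinarith, hr₁⟩, lt_abs.2 (Or.inl hr₂)⟩

theorem quadratic_roots_abs_lt_one_lt_abs {a b c s : K} (ha : a ≠ 0) (hs : 0 ≤ s)
    (h : discrim a b c = s * s) (h1 : a + b + c < 0) (hm1 : 0 < a - b + c) :
    |(-b - s) / (2 * a)| < 1 ∧ 1 < |(-b + s) / (2 * a)| := by
  have hfactor := quadratic_eq_mul_sub_mul_sub ha h
  refine abs_lt_one_lt_abs_of_mul_sub_mul_sub ha ?_ ?_ ?_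
  · have : a * ((-b + s) / (2 * a) - (-b - s) / (2 * a)) = s := by field_simp; ring
    rwa [this]
  · rw [← hfactor]; linarith
  · rw [← hfactor]; linarith

end LinearOrderedField

theorem dispersion_discrim_nonneg {t γ : ℝ} (hγ : -1/6 ≤ γ) :
    0 ≤ (1 + t^2/6)^2 + 4*γ*t^2 := by
  nlinarith [sq_nonneg (1 - t^2/6), sq_nonneg t]

theorem dispersion_roots_general
    (t γ : ℝ) (ht0 : 0 < t) (ht1 : t ≤ 1)
    (hγl : -1/6 ≤ γ) (hγ0 : γ ≠ 0) :
    let cm := (4*γ + 1 + t^2/6 - Real.sqrt ((1 + t^2/6)^2 + 4*γ*t^2)) / (4*γ)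
    let cp := (4*γ + 1 + t^2/6 + Real.sqrt ((1 + t^2/6)^2 + 4*γ*t^2)) / (4*γ)
    (2*γ*cm^2 - (4*γ + 1 + t^2/6)*cm + 2*γ + 1 - t^2/3 = 0) ∧
    (2*γ*cp^2 - (4*γ + 1 + t^2/6)*cp + 2*γ + 1 - t^2/3 = 0) ∧
    |cm| ≤ 1 ∧ 1 ≤ |cp| ∧
    (∀ c : ℝ, 2*γ*c^2 - (4*γ + 1 + t^2/6)*c + 2*γ + 1 - t^2/3 = 0 → c = cm ∨ c = cp) := by
  intro cm cp
  set s := Real.sqrt ((1 + t^2/6)^2 + 4*γ*t^2)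
  have ha : 2 * γ ≠ 0 := by positivity
  have hdisc : discrim (2*γ) (-(4*γ + 1 + t^2/6)) (2*γ + 1 - t^2/3) = s * s := by
    rw [Real.mul_self_sqrt (dispersion_discrim_nonneg hγl), discrim]; ring
  have hcm : cm = (-(-(4*γ + 1 + t^2/6)) - s) / (2 * (2*γ)) := by ring
  have hcp : cp = (-(-(4*γ + 1 + t^2/6)) + s) / (2 * (2*γ)) := by ring
  have hroots (c : ℝ) :
      2*γ*c^2 - (4*γ + 1 + t^2/6)*c + 2*γ + 1 - t^2/3 = 0 ↔ c = cp ∨ c = cm := by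
    have hstd : 2*γ*c^2 - (4*γ + 1 + t^2/6)*c + 2*γ + 1 - t^2/3
        = 2*γ * (c * c) + -(4*γ + 1 + t^2/6) * c + (2*γ + 1 - t^2/3) := by ring
    rw [hstd, hcp, hcm]
    exact quadratic_eq_zero_iff ha hdisc c
  have ht2 : 0 < t^2 ∧ t^2 ≤ 1 := ⟨by positivity, pow_le_one₀ ht0.le ht1⟩
  have hp1 : 2*γ + -(4*γ + 1 + t^2/6) + (2*γ + 1 - t^2/3) = -t^2/2 := by ring
  have hpm1 : 2*γ - -(4*γ + 1 + t^2/6) + (2*γ + 1 - t^2/3) = 8*γ + 2 - t^2/6 := by ring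
  obtain ⟨hcm_lt, hcp_gt⟩ := quadratic_roots_abs_lt_one_lt_abs ha (Real.sqrt_nonneg _) hdisc
    (by rw [hp1]; linarith) (by rw [hpm1]; linarith)
  refine ⟨(hroots cm).2 (Or.inr rfl), (hroots cp).2 (Or.inl rfl), hcm ▸ hcm_lt.le,
    hcp ▸ hcp_gt.le, fun c hc => ((hroots c).1 hc).symm⟩

theorem dispersion_roots
    (t γ : ℝ) (ht0 : 0 < t) (ht1 : t ≤ 1)
    (hγl : -1/6 ≤ γ) (hγu : γ ≤ 1/6) (hγ0 : γ ≠ 0) :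
    let cm := (4*γ + 1 + t^2/6 - Real.sqrt ((1 + t^2/6)^2 + 4*γ*t^2)) / (4*γ)
    let cp := (4*γ + 1 + t^2/6 + Real.sqrt ((1 + t^2/6)^2 + 4*γ*t^2)) / (4*γ)
    (2*γ*cm^2 - (4*γ + 1 + t^2/6)*cm + 2*γ + 1 - t^2/3 = 0) ∧
    (2*γ*cp^2 - (4*γ + 1 + t^2/6)*cp + 2*γ + 1 - t^2/3 = 0) ∧
    |cm| ≤ 1 ∧ 1 ≤ |cp| ∧
    (∀ c : ℝ, 2*γ*c^2 - (4*γ + 1 + t^2/6)*c + 2*γ + 1 - t^2/3 = 0 → c = cm ∨ c = cp) :=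
  dispersion_roots_general t γ ht0 ht1 hγl hγ0
end

section
/- Let 0 < t ≤ 1 and -1/6 ≤ γ ≤ 1/6. Define cos t_h⁻ = (4γ + 1 + t²/6 - √((1+t²/6)² + 4γt²)) / (4γ) for γ ≠ 0 (and cos t_h⁻ = (1 - t²/3)/(1 + t²/6) for γ = 0). Then 0 ≤ 1 - cos t_h⁻ ≤ t²/2 and |cos t_h⁻ - 1 + t²/2| ≤ t⁴/6. -/
private lemma aux_bounds (t s c : ℝ) (ht0 : 0 < t) (ht1 : t ≤ 1)
    (hslo : 1 - t^2/6 ≤ s) (hshi : s ≤ 1 + t^2/2)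
    (hc : 1 - c = t^2/(s + (1 + t^2/6))) :
    0 ≤ 1 - c ∧ 1 - c ≤ t^2/2 ∧ |c - 1 + t^2/2| ≤ t^4/6 := by
  have ht2 : 0 < t^2 := by positivity
  have ht2le : t^2 ≤ 1 := by nlinarith
  have hsb : 2 ≤ s + (1 + t^2/6) := by nlinarith
  have hsbpos : 0 < s + (1 + t^2/6) := by linarith
  refine ⟨?_, ?_, ?_⟩
  · rw [hc]; positivity
  · rw [hc, div_le_iff₀ hsbpos]; nlinarith
  · have h1 : c - 1 + t^2/2 = t^2/2 - t^2/(s + (1 + t^2/6)) := by rw [← hc]; ring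
    rw [h1, abs_of_nonneg]
    · have key : t^2/2 - t^2/(s + (1 + t^2/6))
          = (t^2*(s + (1 + t^2/6) - 2))/(2*(s + (1 + t^2/6))) := by
        rw [div_sub_div _ _ two_ne_zero hsbpos.ne', div_eq_div_iff (by positivity) (by positivity)]
        ring
      rw [key, div_le_iff₀ (by positivity)]
      nlinarith [mul_le_mul_of_nonneg_left hshi ht2.le,
        mul_le_mul_of_nonneg_left hsb (show (0:ℝ) ≤ t^4/6 by positivity)]
    · have : t^2/(s + (1 + t^2/6)) ≤ t^2/2 := by
        rw [div_le_div_iff₀ hsbpos (by norm_num : (0:ℝ) < 2)]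
        nlinarith
      linarith

theorem dispersion_minus_root_bounds
    (t γ : ℝ) (ht0 : 0 < t) (ht1 : t ≤ 1)
    (hγl : -1/6 ≤ γ) (hγu : γ ≤ 1/6) :
    let c := if γ = 0 then (1 - t^2/3)/(1 + t^2/6)
      else (4*γ + 1 + t^2/6 - Real.sqrt ((1 + t^2/6)^2 + 4*γ*t^2)) / (4*γ)
    0 ≤ 1 - c ∧ 1 - c ≤ t^2/2 ∧ |c - 1 + t^2/2| ≤ t^4/6 := by
  intro c
  have ht2 : 0 < t^2 := by positivity
  have ht2le : t^2 ≤ 1 := by nlinarith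
  by_cases hγ : γ = 0
  · have hcval : c = (1 - t^2/3)/(1 + t^2/6) := if_pos hγ
    refine aux_bounds t (1 + t^2/6) c ht0 ht1 (by nlinarith) (by nlinarith) ?_
    rw [hcval]
    have hbpos : (0:ℝ) < 1 + t^2/6 := by positivity
    field_simp
    ring
  · have hcval : c = (4*γ + 1 + t^2/6 - Real.sqrt ((1 + t^2/6)^2 + 4*γ*t^2)) / (4*γ) :=
      if_neg hγ
    set s : ℝ := Real.sqrt ((1 + t^2/6)^2 + 4*γ*t^2) with hs
    have hDnn : (1 - t^2/6)^2 ≤ (1 + t^2/6)^2 + 4*γ*t^2 := by nlinarith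
    have hD0 : 0 ≤ (1 + t^2/6)^2 + 4*γ*t^2 := le_trans (by positivity) hDnn
    have hsq : s^2 = (1 + t^2/6)^2 + 4*γ*t^2 := Real.sq_sqrt hD0
    have hslo : 1 - t^2/6 ≤ s := by
      have h := Real.sqrt_le_sqrt hDnn
      rwa [Real.sqrt_sq (by nlinarith)] at h
    have hshi : s ≤ 1 + t^2/2 := by
      have h1 : (1 + t^2/6)^2 + 4*γ*t^2 ≤ (1 + t^2/2)^2 := by nlinarith
      have h := Real.sqrt_le_sqrt h1
      rwa [Real.sqrt_sq (by nlinarith)] at h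
    refine aux_bounds t s c ht0 ht1 hslo hshi ?_
    rw [hcval]
    have hsbpos : 0 < s + (1 + t^2/6) := by nlinarith
    have h4γ : (4:ℝ)*γ ≠ 0 := by
      intro h
      exact hγ (by linarith [h])
    rw [one_sub_div h4γ,
      show 4*γ - (4*γ + 1 + t^2/6 - s) = s - (1 + t^2/6) from by ring,
      div_eq_div_iff h4γ hsbpos.ne']
    linear_combination hsq
end

section
/- Let 0 < t ≤ 1 and -1/6 ≤ γ ≤ 1/6. Then 1 - cos t_h⁻ = t² / (1 + t²/6 + √((1+t²/6)² + 4γt²)), where cos t_h⁻ = (4γ + 1 + t²/6 - √((1+t²/6)² + 4γt²)) / (4γ) for γ ≠ 0. -/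
theorem dispersion_one_minus_cos_identity
    (t γ : ℝ) (ht0 : 0 < t) (ht1 : t ≤ 1)
    (hγl : -1/6 ≤ γ) (hγu : γ ≤ 1/6) (hγ0 : γ ≠ 0) :
    1 - (4*γ + 1 + t^2/6 - Real.sqrt ((1 + t^2/6)^2 + 4*γ*t^2)) / (4*γ)
      = t^2 / (1 + t^2/6 + Real.sqrt ((1 + t^2/6)^2 + 4*γ*t^2)) := by
  have hD : (0:ℝ) ≤ (1 + t^2/6)^2 + 4*γ*t^2 := by nlinarith [sq_nonneg (1 - t^2/6), sq_nonneg t]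
  set s := Real.sqrt ((1 + t^2/6)^2 + 4*γ*t^2) with hsdef
  have hs2 : s^2 = (1 + t^2/6)^2 + 4*γ*t^2 := Real.sq_sqrt hD
  have hsnn : 0 ≤ s := Real.sqrt_nonneg _
  have hden : 1 + t^2/6 + s ≠ 0 := by positivity
  field_simp
  nlinarith [hs2]
end

section
/- Let 0 < t ≤ 1 and -1/6 ≤ γ ≤ 1/6, and define cos t_h⁻ via 1 - cos t_h⁻ = t²/(1 + t²/6 + √((1+t²/6)² + 4γt²)). Then cos t_h⁻ - 1 + t²/2 = (1+6γ)t⁴ / (2(6 + t² + 12γ(1 - cos t_h⁻) + 6γt²)), and consequently |cos t_h⁻ - (1 - t²/2 + ((6γ+1)/12) t⁴)| ≤ C t⁶ for a constant C independent of t and γ. -/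
/-!
Write `u = 1 - cos t_h⁻ = t² / (a + s)` with `a = 1 + t²/6` and `s = √(a² + 4γt²)`.
Rationalizing, `4γu = s - a`, so `u` is the positive root of `2au + 4γu² = t²`.
Modulo this quadratic relation, `(t² - 2u)(6 + t² + 12γu + 6γt²) - (1 + 6γ)t⁴` vanishes,
which is the exact identity. Since `0 ≤ u ≤ t²` and `|γ| ≤ 1/6`, the denominator is
`12 + O(t²)`, and comparing with its value at `t = 0` gives the `O(t⁶)` remainder.
-/

open Real

theorem quadratic_relation_of_div_add_sqrt {a s γ t : ℝ} (hD : a + s ≠ 0)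
    (hs : s ^ 2 = a ^ 2 + 4 * γ * t ^ 2) :
    2 * a * (t ^ 2 / (a + s)) + 4 * γ * (t ^ 2 / (a + s)) ^ 2 = t ^ 2 := by
  field_simp
  linear_combination (-(t ^ 2)) * hs

section

variable {t γ u : ℝ}

theorem half_sq_sub_eq_div_of_quadratic (hrel : 2 * (1 + t ^ 2 / 6) * u + 4 * γ * u ^ 2 = t ^ 2)
    (hE : 6 + t ^ 2 + 12 * γ * u + 6 * γ * t ^ 2 ≠ 0) :
    t ^ 2 / 2 - u = (1 + 6 * γ) * t ^ 4 / (2 * (6 + t ^ 2 + 12 * γ * u + 6 * γ * t ^ 2)) := by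
  rw [eq_div_iff (mul_ne_zero two_ne_zero hE)]
  linear_combination (-6) * hrel

theorem abs_dispersion_perturbation_le (hγl : -1 / 6 ≤ γ) (hγu : γ ≤ 1 / 6) (hu0 : 0 ≤ u)
    (hut : u ≤ t ^ 2) : |t ^ 2 + 12 * γ * u + 6 * γ * t ^ 2| ≤ 4 * t ^ 2 := by
  rw [abs_le]
  constructor <;> nlinarith

end

theorem abs_div_sub_div_le_cube {p x τ : ℝ} (hp : |p| ≤ 2) (hx : |x| ≤ 4 * τ)
    (hτ : τ ≤ 1) :
    |p * τ ^ 2 / (2 * (6 + x)) - p / 12 * τ ^ 2| ≤ τ ^ 3 := by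
  have hτ0 : 0 ≤ τ := by linarith [abs_nonneg x]
  have hE : 2 ≤ 6 + x := by linarith [neg_abs_le x]
  have hdiff :
      p * τ ^ 2 / (2 * (6 + x)) - p / 12 * τ ^ 2 = -(p * x) * τ ^ 2 / (12 * (6 + x)) := by
    field_simp
    ring
  rw [hdiff, abs_div, abs_mul, abs_neg, abs_mul, abs_of_pos (by linarith : (0:ℝ) < 12 * (6 + x)),
    abs_of_nonneg (by positivity : 0 ≤ τ ^ 2), div_le_iff₀ (by linarith)]
  have hpx : |p| * |x| ≤ 2 * (4 * τ) := mul_le_mul hp hx (abs_nonneg x) zero_le_two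
  nlinarith [pow_nonneg hτ0 2, pow_nonneg hτ0 3]

theorem dispersion_taylor_expansion :
    ∃ C : ℝ, 0 < C ∧ ∀ t γ : ℝ, 0 < t → t ≤ 1 → -1/6 ≤ γ → γ ≤ 1/6 →
      (fun c : ℝ =>
        (c - 1 + t^2/2 =
          (1 + 6*γ)*t^4 / (2*(6 + t^2 + 12*γ*(1 - c) + 6*γ*t^2))) ∧
        |c - (1 - t^2/2 + ((6*γ + 1)/12)*t^4)| ≤ C*t^6)
      (1 - t^2 / (1 + t^2/6 + Real.sqrt ((1 + t^2/6)^2 + 4*γ*t^2))) := by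
  refine ⟨1, one_pos, fun t γ ht ht1 hγl hγu => ?_⟩
  set s := √((1 + t ^ 2 / 6) ^ 2 + 4 * γ * t ^ 2)
  have hs : s ^ 2 = (1 + t ^ 2 / 6) ^ 2 + 4 * γ * t ^ 2 := sq_sqrt (by nlinarith)
  have hD : 1 ≤ 1 + t ^ 2 / 6 + s := by
    linarith [sqrt_nonneg ((1 + t ^ 2 / 6) ^ 2 + 4 * γ * t ^ 2), sq_nonneg t]
  set u := t ^ 2 / (1 + t ^ 2 / 6 + s)
  have hrel : 2 * (1 + t ^ 2 / 6) * u + 4 * γ * u ^ 2 = t ^ 2 :=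
    quadratic_relation_of_div_add_sqrt (by linarith) hs
  have hu0 : 0 ≤ u := by positivity
  have hut : u ≤ t ^ 2 := div_le_self (by positivity) hD
  have hx := abs_dispersion_perturbation_le hγl hγu hu0 hut
  have hE : 6 + t ^ 2 + 12 * γ * u + 6 * γ * t ^ 2 ≠ 0 := by
    have : t ^ 2 ≤ 1 := by nlinarith
    linarith [neg_abs_le (t ^ 2 + 12 * γ * u + 6 * γ * t ^ 2)]
  have key := half_sq_sub_eq_div_of_quadratic hrel hE
  simp only [sub_sub_cancel]
  constructor
  · linear_combination key
  · have hp : |1 + 6 * γ| ≤ 2 := abs_le.2 ⟨by linarith, by linarith⟩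
    have hbound := abs_div_sub_div_le_cube hp hx (by nlinarith)
    convert hbound using 2
    · linear_combination key
    · ring
end

section
/- There exists a constant C > 0 such that for all k ≥ 1, h > 0 with t = kh ≤ 1, and all γ ∈ [-1/6, 1/6], the discrete wave number k_h⁻ := t_h⁻/h, where t_h⁻ ∈ (0, π/2) satisfies cos t_h⁻ = (4γ + 1 + t²/6 - √((1+t²/6)² + 4γt²))/(4γ), satisfies |k_h⁻ - k| ≤ C k³ h². -/
set_option maxHeartbeats 2000000 in
theorem phase_error_general :
    ∃ C : ℝ, 0 < C ∧ ∀ k h γ th : ℝ, 1 ≤ k → 0 < h → k*h ≤ 1 →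
      -1/6 ≤ γ → γ ≤ 1/6 →
      th ∈ Set.Ioo 0 (Real.pi/2) →
      2*γ*(Real.cos th)^2 - (4*γ + 1 + (k*h)^2/6)*(Real.cos th)
        + 2*γ + 1 - (k*h)^2/3 = 0 →
      |th/h - k| ≤ C * k^3 * h^2 := by
  refine ⟨3, by norm_num, ?_⟩
  intro k h γ th hk hh ht hγ1 hγ2 hth heq
  set t := k*h with htdef
  have ht0 : 0 < t := by positivity
  obtain ⟨hth0, hthπ⟩ := hth
  have hπpos := Real.pi_pos
  have hπ : (3.14 : ℝ) ≤ Real.pi := Real.pi_gt_d2.le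
  have hπ' : Real.pi ≤ 3.15 := Real.pi_lt_d2.le
  have hc1 : Real.cos th < 1 := by
    have h0 : Real.cos th < Real.cos 0 :=
      Real.cos_lt_cos_of_nonneg_of_le_pi le_rfl (by linarith) hth0
    simpa using h0
  have hc0 : 0 < Real.cos th := Real.cos_pos_of_mem_Ioo ⟨by linarith, hthπ⟩
  set e := 1 - Real.cos th with hedef
  have he0 : 0 < e := by rw [hedef]; linarith
  have he1 : e < 1 := by rw [hedef]; linarith
  -- key identity
  have hkey : e*(1+t^2/6) + 2*γ*e^2 = t^2/2 := by
    rw [hedef]; linear_combination heq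
  -- e ≤ 3t^2/4
  have hee : e^2 ≤ e := by nlinarith [he0, he1]
  have hge1 : -(e^2)/6 ≤ γ*e^2 := by nlinarith [sq_nonneg e, hγ1]
  have hge2 : γ*e^2 ≤ e^2/6 := by nlinarith [sq_nonneg e, hγ2]
  have het : 0 ≤ e*t^2 := by positivity
  have heb : e ≤ 3*t^2/4 := by nlinarith [hkey, hee, hge1, het]
  -- |e - t^2/2| ≤ t^4/3
  have hmul1 : e*t^2 ≤ (3*t^2/4)*t^2 := by nlinarith [heb, sq_nonneg t]
  have hmul2 : e^2 ≤ (3*t^2/4)^2 := by nlinarith [heb, he0.le]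
  have hed : |e - t^2/2| ≤ t^4/3 := by
    rw [abs_le]
    constructor <;> nlinarith [hkey, hmul1, hmul2, hge1, hge2, het, sq_nonneg e]
  -- cos t bound
  have hcb : |Real.cos t - (1 - t^2/2)| ≤ |t|^4 * (5/96) :=
    Real.cos_bound (by rw [abs_of_pos ht0]; exact ht)
  rw [abs_of_pos ht0] at hcb
  -- |cos th - cos t| ≤ t^4/2
  have hdiff : |Real.cos th - Real.cos t| ≤ t^4/2 := by
    have e1 := abs_le.mp hed
    have e2 := abs_le.mp hcb
    have ht4 : (0:ℝ) ≤ t^4 := by positivity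
    rw [abs_le]
    constructor <;> [ (nlinarith [e1.1, e1.2, e2.1, e2.2, ht4]) ;
                      (nlinarith [e1.1, e1.2, e2.1, e2.2, ht4]) ]
  -- product formula
  have habs : |Real.cos th - Real.cos t|
      = 2 * |Real.sin ((th + t)/2)| * |Real.sin ((th - t)/2)| := by
    rw [Real.cos_sub_cos, abs_mul, abs_mul]
    norm_num
  have htπ : t ≤ Real.pi/2 := by linarith
  have hsapos : 0 ≤ Real.sin ((th+t)/2) :=
    Real.sin_nonneg_of_nonneg_of_le_pi (by linarith) (by linarith)
  have hsa : t/Real.pi ≤ Real.sin ((th+t)/2) := by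
    have h1 : 2/Real.pi * ((th+t)/2) ≤ Real.sin ((th+t)/2) :=
      Real.mul_le_sin (by linarith) (by linarith)
    have h2 : t/Real.pi ≤ 2/Real.pi * ((th+t)/2) := by
      rw [div_le_iff₀ hπpos] at *
      have : 2/Real.pi * ((th+t)/2) * Real.pi = th + t := by field_simp
      rw [this]; linarith
    linarith
  have hsd : |th-t|/Real.pi ≤ |Real.sin ((th-t)/2)| := by
    have h1 : 2/Real.pi * |(th-t)/2| ≤ |Real.sin ((th-t)/2)| :=
      Real.mul_abs_le_abs_sin (by rw [abs_le]; constructor <;> [linarith; linarith])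
    have h2 : 2/Real.pi * |(th-t)/2| = |th-t|/Real.pi := by
      rw [abs_div]
      rw [abs_of_pos (by norm_num : (0:ℝ) < 2)]
      field_simp
    linarith [h2 ▸ h1]
  -- lower bound chain
  have hlow : 2 * (t/Real.pi) * (|th-t|/Real.pi) ≤ t^4/2 := by
    have h1 : 2 * (t/Real.pi) * (|th-t|/Real.pi)
        ≤ 2 * |Real.sin ((th + t)/2)| * |Real.sin ((th - t)/2)| := by
      have ha : 0 ≤ t/Real.pi := by positivity
      have hb : 0 ≤ |th-t|/Real.pi := by positivity
      have hsa' : t/Real.pi ≤ |Real.sin ((th+t)/2)| := by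
        rw [abs_of_nonneg hsapos]; exact hsa
      have hmm := mul_le_mul hsa' hsd hb (abs_nonneg _)
      calc 2 * (t/Real.pi) * (|th-t|/Real.pi)
          = 2 * ((t/Real.pi) * (|th-t|/Real.pi)) := by ring
        _ ≤ 2 * (|Real.sin ((th + t)/2)| * |Real.sin ((th - t)/2)|) := by linarith
        _ = 2 * |Real.sin ((th + t)/2)| * |Real.sin ((th - t)/2)| := by ring
    calc 2 * (t/Real.pi) * (|th-t|/Real.pi)
        ≤ 2 * |Real.sin ((th + t)/2)| * |Real.sin ((th - t)/2)| := h1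
      _ = |Real.cos th - Real.cos t| := habs.symm
      _ ≤ t^4/2 := hdiff
  -- conclude |th - t| ≤ 3 t^3
  have hπ2 : Real.pi^2 ≤ 10 := by
    have hsq : Real.pi^2 ≤ 3.15^2 := pow_le_pow_left₀ hπpos.le hπ' 2
    norm_num at hsq
    linarith
  have hB : 2*t*|th-t| ≤ Real.pi^2 * (t^4/2) := by
    have h1 : 2 * (t/Real.pi) * (|th-t|/Real.pi) = 2*t*|th-t|/Real.pi^2 := by
      rw [mul_div_assoc' 2 t Real.pi, div_mul_div_comm, sq]
    rw [h1] at hlow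
    rw [div_le_iff₀ (by positivity : (0:ℝ) < Real.pi^2)] at hlow
    linarith [hlow]
  have hfin : |th - t| ≤ 3 * t^3 := by
    have h2 : 2*t*|th-t| ≤ 5*t^4 := by nlinarith [pow_pos ht0 4]
    have h3 : t*|th-t| ≤ t*(3*t^3) := by nlinarith [abs_nonneg (th-t)]
    exact le_of_mul_le_mul_left h3 ht0
  -- translate
  have hq : th/h - k = (th - t)/h := by rw [htdef]; field_simp
  rw [hq, abs_div, abs_of_pos hh, div_le_iff₀ hh]
  have h5 : 3*k^3*h^2*h = 3*t^3 := by rw [htdef]; ring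
  rw [h5]
  exact hfin
end

section
/- There exists a constant C > 0 such that for all k ≥ 1 and h > 0 with t = kh ≤ 1, if γ = -1/12, then the discrete wave number k_h⁻ = t_h⁻/h defined by cos t_h⁻ = (4γ + 1 + t²/6 - √((1+t²/6)² + 4γt²))/(4γ) with t_h⁻ ∈ (0, π/2) satisfies |k_h⁻ - k| ≤ C k⁵ h⁴. -/
/-!
For `γ = -1/12` the dispersion relation reads `cos t_h⁻ = 3 √(1 + t⁴/36) - 2 - t²/2`, which agrees
with the Taylor polynomial `1 - t²/2 + t⁴/24` of `cos t` up to `O(t⁸)`, so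
`|cos t_h⁻ - cos t| = O(t⁶)`. Writing the difference of cosines as a product of sines, Jordan's
inequality gives `|cos x - cos y| ≥ (2/π²)(x + y)|x - y| ≥ (2/π²) t |t_h⁻ - t|`, hence
`|t_h⁻ - t| = O(t⁵)`, and dividing by `h` gives `|k_h⁻ - k| = O(k⁵ h⁴)`.
-/

open Finset Real

theorem Complex.cos_bound_six {x : ℂ} (hx : ‖x‖ ≤ 1) :
    ‖cos x - (1 - x ^ 2 / 2 + x ^ 4 / 24)‖ ≤ ‖x‖ ^ 6 * (7 / 4320) :=
  calc
    ‖cos x - (1 - x ^ 2 / 2 + x ^ 4 / 24)‖ =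
        ‖(exp (-x * I) - ∑ m ∈ range 6, (-x * I) ^ m / m.factorial) / 2 +
         (exp (x * I) - ∑ m ∈ range 6, (x * I) ^ m / m.factorial) / 2‖ := by
      simp [cos, field, Finset.sum_range_succ, Nat.factorial]
      grind [I_sq, two_ne_zero]
    _ ≤ ‖exp (-x * I) - ∑ m ∈ range 6, (-x * I) ^ m / m.factorial‖ / 2 +
        ‖exp (x * I) - ∑ m ∈ range 6, (x * I) ^ m / m.factorial‖ / 2 := by
      grw [norm_add_le]
      simp
    _ ≤ ‖-x * I‖ ^ 6 * (Nat.succ 6 * (Nat.factorial 6 * (6 : ℕ) : ℝ)⁻¹) / 2 +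
        ‖x * I‖ ^ 6 * (Nat.succ 6 * (Nat.factorial 6 * (6 : ℕ) : ℝ)⁻¹) / 2 := by
      grw [exp_bound (by simpa) (by simp), exp_bound (by simpa) (by simp)]
    _ = ‖x‖ ^ 6 * (7 / 4320) := by norm_num [Nat.factorial]

theorem Real.cos_bound_six {x : ℝ} (hx : |x| ≤ 1) :
    |cos x - (1 - x ^ 2 / 2 + x ^ 4 / 24)| ≤ |x| ^ 6 * (7 / 4320) := by
  simpa [← Complex.ofReal_cos, ← norm_eq_abs, ← Complex.norm_real] using
    Complex.cos_bound_six (x := x) (by simpa)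

theorem Real.abs_sqrt_one_add_sub_le {u : ℝ} (hu : 0 ≤ u) :
    |√(1 + u) - (1 + u / 2)| ≤ u ^ 2 / 8 := by
  rw [abs_sub_le_iff]
  constructor
  · have : √(1 + u) ≤ 1 + u / 2 := Real.sqrt_le_iff.2 ⟨by positivity, by nlinarith⟩
    nlinarith
  · rcases le_or_gt (1 + u / 2 - u ^ 2 / 8) 0 with h | h
    · nlinarith [Real.sqrt_nonneg (1 + u)]
    · -- positivity of the lower bound forces `u < 8`, where its square is at most `1 + u`
      have : 1 + u / 2 - u ^ 2 / 8 ≤ √(1 + u) :=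
        Real.le_sqrt_of_sq_le (by nlinarith [mul_nonneg hu (sq_nonneg u)])
      linarith

theorem Real.two_div_pi_sq_mul_le_abs_cos_sub_cos {x y : ℝ} (hx : 0 ≤ x) (hy : 0 ≤ y)
    (hxy : x + y ≤ π) : 2 / π ^ 2 * ((x + y) * |x - y|) ≤ |cos x - cos y| := by
  have hsum : (x + y) / π ≤ sin ((x + y) / 2) := by
    simpa [div_mul_div_comm, mul_comm π] using
      mul_le_sin (x := (x + y) / 2) (by positivity) (by linarith)
  have hdiff : |x - y| / π ≤ |sin ((x - y) / 2)| := by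
    have : |(x - y) / 2| ≤ π / 2 := by
      rw [abs_div, abs_two]; gcongr; exact abs_sub_le_iff.2 ⟨by linarith, by linarith⟩
    simpa [abs_div, div_mul_div_comm, mul_comm π] using mul_abs_le_abs_sin this
  have hsum_nonneg : 0 ≤ sin ((x + y) / 2) := (by positivity : 0 ≤ (x + y) / π).trans hsum
  calc 2 / π ^ 2 * ((x + y) * |x - y|) = 2 * ((x + y) / π) * (|x - y| / π) := by ring
    _ ≤ 2 * sin ((x + y) / 2) * |sin ((x - y) / 2)| := by gcongr
    _ = |cos x - cos y| := by
      rw [cos_sub_cos, abs_mul, abs_mul, abs_of_nonneg hsum_nonneg]; norm_num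

theorem cip_dispersion_special_parameter_eq (t : ℝ) :
    (4 * (-1 / 12) + 1 + t ^ 2 / 6 - √((1 + t ^ 2 / 6) ^ 2 + 4 * (-1 / 12) * t ^ 2)) /
      (4 * (-1 / 12)) = 3 * √(1 + t ^ 4 / 36) - 2 - t ^ 2 / 2 := by
  rw [show (1 + t ^ 2 / 6) ^ 2 + 4 * (-1 / 12) * t ^ 2 = 1 + t ^ 4 / 36 by ring]
  ring

theorem abs_sub_le_pow_five_of_cos_eq {t θ : ℝ} (ht₀ : 0 < t) (ht₁ : t ≤ 1)
    (hθ : θ ∈ Set.Ioo 0 (π / 2)) (hcos : cos θ = 3 * √(1 + t ^ 4 / 36) - 2 - t ^ 2 / 2) :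
    |θ - t| ≤ t ^ 5 := by
  have hθP : |cos θ - (1 - t ^ 2 / 2 + t ^ 4 / 24)| ≤ t ^ 8 / 3456 := by
    rw [hcos, show 3 * √(1 + t ^ 4 / 36) - 2 - t ^ 2 / 2 - (1 - t ^ 2 / 2 + t ^ 4 / 24) =
      3 * (√(1 + t ^ 4 / 36) - (1 + t ^ 4 / 36 / 2)) by ring, abs_mul, abs_of_pos three_pos]
    linarith [abs_sqrt_one_add_sub_le (u := t ^ 4 / 36) (by positivity)]
  have htP : |cos t - (1 - t ^ 2 / 2 + t ^ 4 / 24)| ≤ t ^ 6 * (7 / 4320) := by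
    simpa [abs_of_pos ht₀] using cos_bound_six (x := t) (by rwa [abs_of_pos ht₀])
  have hcos_sub : |cos θ - cos t| ≤ t ^ 6 / 500 := by
    have ht86 : t ^ 8 ≤ t ^ 6 := pow_le_pow_of_le_one ht₀.le ht₁ (by norm_num)
    have htri := abs_sub_le (cos θ) (1 - t ^ 2 / 2 + t ^ 4 / 24) (cos t)
    rw [abs_sub_comm (1 - t ^ 2 / 2 + t ^ 4 / 24)] at htri
    linarith [pow_pos ht₀ 6]
  have hjordan := two_div_pi_sq_mul_le_abs_cos_sub_cos hθ.1.le ht₀.le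
    (by linarith [hθ.2, pi_gt_three])
  have hpi : π ^ 2 < 10 := by nlinarith [pi_lt_d2, pi_pos]
  have hmul : t * |θ - t| ≤ t * t ^ 5 := by
    have h1 : t * |θ - t| ≤ (θ + t) * |θ - t| := by gcongr; linarith [hθ.1]
    have h2 : 2 / π ^ 2 * ((θ + t) * |θ - t|) ≤ t ^ 6 / 500 := hjordan.trans hcos_sub
    rw [div_mul_eq_mul_div, div_le_iff₀ (by positivity)] at h2
    nlinarith [pow_pos ht₀ 6]
  exact le_of_mul_le_mul_left hmul ht₀

theorem phase_error_special_parameter :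
    ∃ C : ℝ, 0 < C ∧ ∀ k h γ th : ℝ, 1 ≤ k → 0 < h → k*h ≤ 1 →
      γ = -1/12 →
      th ∈ Set.Ioo 0 (Real.pi/2) →
      Real.cos th = (4*γ + 1 + (k*h)^2/6
          - Real.sqrt ((1 + (k*h)^2/6)^2 + 4*γ*(k*h)^2)) / (4*γ) →
      |th/h - k| ≤ C * k^5 * h^4 := by
  refine ⟨1, one_pos, fun k h γ th hk hh hkh hγ hth hcos => ?_⟩
  rw [hγ, cip_dispersion_special_parameter_eq] at hcos
  have hphase := abs_sub_le_pow_five_of_cos_eq (mul_pos (by linarith) hh) hkh hth hcos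
  calc |th / h - k| = |th - k * h| / h := by
        rw [← abs_of_pos hh, ← abs_div, abs_of_pos hh, sub_div, mul_div_cancel_right₀ _ hh.ne']
    _ ≤ (k * h) ^ 5 / h := by gcongr
    _ = 1 * k ^ 5 * h ^ 4 := by field_simp
end

section
/- Define γ_o(t) = (6 cos t - 6 + t² cos t + 2t²) / (12 (1 - cos t)²) for 0 < t ≤ 1. Then the smaller-modulus root cos t_h⁻(γ) of the dispersion relation 2γc² - (4γ+1+t²/6)c + 2γ+1-t²/3 = 0 evaluated at γ = γ_o equals cos t; i.e., with the optimal penalty parameter the discrete normalized wavenumber t_h⁻ equals t exactly. -/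
theorem optimal_parameter_no_phase_error
    (t : ℝ) (ht0 : 0 < t) (ht1 : t ≤ 1) :
    let γo := (6*Real.cos t - 6 + t^2*Real.cos t + 2*t^2) / (12*(1 - Real.cos t)^2)
    (4*γo + 1 + t^2/6 - Real.sqrt ((1 + t^2/6)^2 + 4*γo*t^2)) / (4*γo) = Real.cos t := by
  intro γo
  set c := Real.cos t with hc
  have hbound : |c - (1 - t ^ 2 / 2)| ≤ |t| ^ 4 * (5 / 96) := Real.cos_bound (by
    rw [abs_of_pos ht0]; exact ht1)
  rw [abs_of_pos ht0] at hbound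
  rw [abs_le] at hbound
  obtain ⟨hb1, hb2⟩ := hbound
  have ht2 : t^2 ≤ 1 := by nlinarith
  have ht4 : t^4 ≤ t^2 := by nlinarith [sq_nonneg t, sq_nonneg (t^2)]
  have ht6 : t^6 ≤ t^4 := by nlinarith [sq_nonneg (t^2), sq_nonneg (t^3)]
  have htp2 : (0:ℝ) < t^2 := pow_pos ht0 2
  have htp4 : (0:ℝ) < t^4 := pow_pos ht0 4
  have hmul2 := mul_le_mul_of_nonneg_left hb2 (sq_nonneg t)
  have hmul1 := mul_le_mul_of_nonneg_left hb1 (sq_nonneg t)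
  -- d = 1 - cos t > 0
  have hd : (0:ℝ) < 1 - c := by nlinarith
  -- N < 0
  have hN : 6*c - 6 + t^2*c + 2*t^2 < 0 := by nlinarith
  have hd2 : (0:ℝ) < 12*(1 - c)^2 := by positivity
  have hγ : γo = (6*c - 6 + t^2*c + 2*t^2) / (12*(1 - c)^2) := rfl
  have hγneg : γo < 0 := by rw [hγ]; exact div_neg_of_neg_of_pos hN hd2
  have hγne : γo ≠ 0 := ne_of_lt hγneg
  -- key nonnegativity: 4γo(1-c) + 1 + t²/6 ≥ 0
  have hE : 0 ≤ 4*γo*(1-c) + (1 + t^2/6) := by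
    rw [hγ]
    have h4 : (0:ℝ) < 3*(1-c) := by linarith
    have heq : 4*((6*c - 6 + t^2*c + 2*t^2) / (12*(1 - c)^2))*(1-c) + (1 + t^2/6)
        = (6*c - 6 + t^2*c + 2*t^2 + (1 + t^2/6)*(3*(1-c))) / (3*(1-c)) := by
      field_simp; ring
    rw [heq]
    apply div_nonneg _ h4.le
    nlinarith
  -- sqrt computation
  have hsq : (1 + t^2/6)^2 + 4*γo*t^2 = (4*γo*(1-c) + (1 + t^2/6))^2 := by
    have hkey : 4*γo*(1-c)^2 + 2*(1-c)*(1 + t^2/6) = t^2 := by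
      rw [hγ]
      field_simp
      ring
    linear_combination (-4*γo)*hkey
  have hroot : Real.sqrt ((1 + t^2/6)^2 + 4*γo*t^2) = 4*γo*(1-c) + (1 + t^2/6) := by
    rw [hsq]
    exact Real.sqrt_sq hE
  rw [hroot]
  have h5 : 4*γo + 1 + t^2/6 - (4*γo*(1-c) + (1 + t^2/6)) = 4*γo*c := by ring
  rw [h5]
  exact mul_div_cancel_left₀ c (by simpa using hγne)
end

section
/- There exists a constant C > 0 such that for all k ≥ 1, h > 0 with t = kh ≤ 1, and all γ ∈ [-1/6,1/6] with |γ - γ_o| ≤ 1/(k²h), where γ_o = (6cos t - 6 + t² cos t + 2t²)/(12(1-cos t)²), the discrete wave number k_h⁻ = t_h⁻/h satisfies |k_h⁻ - k| ≤ C k h. -/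
set_option maxHeartbeats 1000000

open Real

theorem phase_error_near_optimal_parameter :
    ∃ C : ℝ, 0 < C ∧ ∀ k h γ th : ℝ, 1 ≤ k → 0 < h → k*h ≤ 1 →
      -1/6 ≤ γ → γ ≤ 1/6 →
      |γ - (6*Real.cos (k*h) - 6 + (k*h)^2*Real.cos (k*h) + 2*(k*h)^2)
          / (12*(1 - Real.cos (k*h))^2)| ≤ 1/(k^2*h) →
      th ∈ Set.Ioo 0 (Real.pi/2) →
      2*γ*(Real.cos th)^2 - (4*γ + 1 + (k*h)^2/6)*(Real.cos th)
        + 2*γ + 1 - (k*h)^2/3 = 0 →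
      |th/h - k| ≤ C * k * h := by
  refine ⟨12, by norm_num, ?_⟩
  intro k h γ th hk hh hkh hγ1 hγ2 hγo hth hq
  obtain ⟨hth0, hthπ⟩ := hth
  have hπ3 : (3:ℝ) < π := pi_gt_three
  have hπ4 : π ≤ 4 := pi_le_four
  set t := k*h with ht
  have ht0 : 0 < t := by positivity
  have ht1 : t ≤ 1 := hkh
  set c := Real.cos t with hc
  set ch := Real.cos th with hch
  set γo := (6*c - 6 + t^2*c + 2*t^2) / (12*(1 - c)^2) with hγodef
  -- basic bounds on cosines
  have hc1 : c < 1 := by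
    have h1 := Real.cos_lt_cos_of_nonneg_of_le_pi (le_refl 0) (by linarith : t ≤ π) ht0
    rw [Real.cos_zero] at h1
    exact h1
  have hc0 : 0 < c := cos_pos_of_mem_Ioo ⟨by linarith, by linarith⟩
  have hch1 : ch ≤ 1 := Real.cos_le_one th
  have hch0 : 0 < ch := cos_pos_of_mem_Ioo ⟨by linarith, by linarith⟩
  have h1cne : (1 - c) ≠ 0 := by linarith
  have hγoeq : 12 * γo * (1-c)^2 = 6*c - 6 + t^2*c + 2*t^2 := by
    rw [hγodef]; field_simp
  -- key algebraic identity
  have key : (ch - c) * (1 + t^2/6 + 2*γ*(2 - ch - c)) = 2*(γ - γo)*(1-c)^2 := by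
    linear_combination (-1 : ℝ) * hq + (1/6 : ℝ) * hγoeq
  -- denominator bound
  have hD : (1:ℝ)/3 ≤ 1 + t^2/6 + 2*γ*(2 - ch - c) := by
    have hp : (0:ℝ) ≤ (γ + 1/6) * (2 - ch - c) :=
      mul_nonneg (by linarith) (by linarith)
    have hsq : (0:ℝ) ≤ t^2 := sq_nonneg t
    linarith [hp, hsq]
  -- bound on 1 - c
  have hcq : 1 - c ≤ t^2/2 := by
    have := Real.one_sub_sq_div_two_le_cos (x := t)
    linarith
  have hcnn : 0 ≤ 1 - c := by linarith
  have hccsq : (1-c)^2 ≤ t^4/4 := by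
    have := pow_le_pow_left₀ hcnn hcq 2
    have hx : (t^2/2)^2 = t^4/4 := by ring
    linarith [this, hx]
  -- bound |ch - c|
  have hk2h : 0 < k^2*h := by positivity
  have hchc : |ch - c| ≤ (3/2) * k^2 * h^3 := by
    have h1 : |ch - c| * (1/3) ≤ |ch - c| * (1 + t^2/6 + 2*γ*(2 - ch - c)) :=
      mul_le_mul_of_nonneg_left hD (abs_nonneg _)
    have h2 : |ch - c| * (1 + t^2/6 + 2*γ*(2 - ch - c))
        = |2*(γ - γo)*(1-c)^2| := by
      rw [← abs_of_nonneg (by linarith : (0:ℝ) ≤ 1 + t^2/6 + 2*γ*(2 - ch - c)), ← abs_mul, key]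
    have h3 : |2*(γ - γo)*(1-c)^2| = 2 * |γ - γo| * (1-c)^2 := by
      rw [abs_mul, abs_mul, abs_of_nonneg (by norm_num : (0:ℝ) ≤ 2),
        abs_of_nonneg (by positivity : (0:ℝ) ≤ (1-c)^2)]
    have h4 : 2 * |γ - γo| * (1-c)^2 ≤ 2 * (1/(k^2*h)) * (t^4/4) := by
      apply mul_le_mul (mul_le_mul_of_nonneg_left hγo (by norm_num)) hccsq (by positivity)
      positivity
    have hkne : k ≠ 0 := ne_of_gt (lt_of_lt_of_le one_pos hk)
    have hhne : h ≠ 0 := ne_of_gt hh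
    have h5 : 2 * (1/(k^2*h)) * (t^4/4) = (1/2) * k^2 * h^3 := by
      rw [ht]
      field_simp
      ring
    linarith [h1, h2, h3, h4, h5]
  -- trig lower bound
  have hccformula : c - ch = -2 * Real.sin ((t+th)/2) * Real.sin ((t-th)/2) :=
    Real.cos_sub_cos t th
  set u := (t+th)/2 with hu
  set v := (t-th)/2 with hv
  have hu0 : 0 ≤ u := by rw [hu]; linarith
  have huπ : u ≤ π/2 := by rw [hu]; linarith
  have hsinu : 2/π * u ≤ Real.sin u := Real.mul_le_sin hu0 huπ
  have hvabs : |v| ≤ π/2 := by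
    rw [hv, abs_le]; constructor <;> linarith
  have hπpos : 0 < π := by linarith
  have hsinv : 2/π * |v| ≤ |Real.sin v| := by
    rcases le_or_gt 0 v with hv0 | hv0
    · calc 2/π * |v| = 2/π * v := by rw [abs_of_nonneg hv0]
        _ ≤ Real.sin v := Real.mul_le_sin hv0 (by rwa [abs_of_nonneg hv0] at hvabs)
        _ ≤ |Real.sin v| := le_abs_self _
    · have h6 : 2/π * (-v) ≤ Real.sin (-v) :=
        Real.mul_le_sin (by linarith) (by rwa [abs_of_neg hv0] at hvabs)
      rw [Real.sin_neg] at h6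
      calc 2/π * |v| = 2/π * (-v) := by rw [abs_of_neg hv0]
        _ ≤ -Real.sin v := h6
        _ ≤ |Real.sin v| := neg_le_abs _
  have hsinu0 : 0 ≤ Real.sin u := le_trans (by positivity) hsinu
  have hlow : 2/π^2 * t * |t - th| ≤ |c - ch| := by
    have h6 : |c - ch| = 2 * Real.sin u * |Real.sin v| := by
      rw [hccformula, abs_mul, abs_mul, abs_of_nonpos (by norm_num : (-2:ℝ) ≤ 0),
        abs_of_nonneg hsinu0]
      ring
    have h7 : 2/π * (t/2) ≤ 2/π * u := by
      apply mul_le_mul_of_nonneg_left _ (by positivity)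
      rw [hu]; linarith
    have h8 : |t - th| = 2 * |v| := by
      rw [hv, abs_div, abs_of_nonneg (by norm_num : (0:ℝ) ≤ 2)]; ring
    have h9 : (2/π * (t/2)) * (2/π * |v|) ≤ Real.sin u * |Real.sin v| :=
      mul_le_mul (le_trans h7 hsinu) hsinv (by positivity) hsinu0
    rw [h6, h8]
    calc 2/π^2 * t * (2*|v|) = 2 * ((2/π * (t/2)) * (2/π * |v|)) := by
          field_simp
      _ ≤ 2 * (Real.sin u * |Real.sin v|) := by linarith
      _ = 2 * Real.sin u * |Real.sin v| := by ring
  -- combine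
  have hfinal : |t - th| ≤ 12 * k * h^2 := by
    have hπ2 : π^2 ≤ 16 := by
      have := pow_le_pow_left₀ (by linarith : (0:ℝ) ≤ π) hπ4 2
      norm_num at this
      linarith
    have h10 : 2/π^2 * t * |t - th| ≤ (3/2) * k^2 * h^3 :=
      le_trans hlow ((abs_sub_comm c ch) ▸ hchc)
    have hπ2pos : 0 < π^2 := by positivity
    have h11 : t * |t - th| ≤ (3/4) * π^2 * k^2 * h^3 := by
      calc t * |t - th| = π^2/2 * (2/π^2 * t * |t - th|) := by field_simp
        _ ≤ π^2/2 * ((3/2) * k^2 * h^3) := by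
            apply mul_le_mul_of_nonneg_left h10 (by positivity)
        _ = (3/4) * π^2 * k^2 * h^3 := by ring
    have hkh3 : (0:ℝ) ≤ k^2*h^3 := by positivity
    have h12 : t * |t - th| ≤ 12 * k^2 * h^3 := by
      have hp2 : (0:ℝ) ≤ (16 - π^2) * (k^2*h^3) :=
        mul_nonneg (by linarith) hkh3
      linarith [h11, hp2]
    have hkh0 : 0 < k*h := ht0
    have h13 : k*h * |t - th| ≤ k*h * (12 * k * h^2) := by
      calc k*h * |t - th| = t * |t - th| := by rw [ht]
        _ ≤ 12 * k^2 * h^3 := h12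
        _ = k*h * (12 * k * h^2) := by ring
    exact le_of_mul_le_mul_left h13 hkh0
  have heq0 : th/h - k = (th - t)/h := by
    rw [ht]; field_simp
  have heq : |th/h - k| = |t - th| / h := by
    rw [heq0, abs_div, abs_of_pos hh, abs_sub_comm]
  rw [heq, div_le_iff₀ hh]
  calc |t - th| ≤ 12 * k * h^2 := hfinal
    _ = 12 * k * h * h := by ring
end

section
/- For any 0 < t ≤ 1 and real γ, γ₀ ∈ [-1/6, 1/6] both nonzero, the corresponding roots satisfy |cos t_h⁻(γ) - cos t_h⁻(γ₀)| ≤ C |γ - γ₀| t⁴ for an absolute constant C, where cos t_h⁻(γ) = (4γ + 1 + t²/6 - √((1+t²/6)² + 4γt²))/(4γ). -/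
/-!
Rationalizing the numerator gives `cos t_h⁻(γ) = 1 - t² / (a + s(γ))` with `a = 1 + t²/6` and
`s(γ) = √(a² + 4γt²)`, which removes the apparent singularity at `γ = 0`. Since
`s(γ)² - s(γ₀)² = 4(γ - γ₀)t²`, the difference of two roots is `4(γ - γ₀)t⁴` divided by
`(s(γ) + s(γ₀))(a + s(γ))(a + s(γ₀))`, and for `γ ≥ -1/6` the radicand dominates `(1 - t²/6)²`,
so every factor of that denominator is at least `1` once `t ≤ 1`.
-/

noncomputable section

def cipDiscr (t γ : ℝ) : ℝ := (1 + t^2/6)^2 + 4*γ*t^2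

/-- The propagating root `cos t_h⁻(γ)`. -/
def cipRoot (t γ : ℝ) : ℝ := (4*γ + 1 + t^2/6 - √(cipDiscr t γ)) / (4*γ)

lemma sub_sqrt_div_eq_neg_div_add_sqrt {a c x : ℝ} (ha : 0 < a) (hc : c ≠ 0)
    (hx : 0 ≤ a^2 + c*x) : (a - √(a^2 + c*x)) / c = -x / (a + √(a^2 + c*x)) := by
  have hs : √(a^2 + c*x) ^ 2 = a^2 + c*x := Real.sq_sqrt hx
  have hden : a + √(a^2 + c*x) ≠ 0 := by positivity
  rw [div_eq_div_iff hc hden]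
  linear_combination -hs

lemma div_add_sub_div_add_of_sq_eq {a s s₀ c c₀ x : ℝ} (hs : s^2 = a^2 + c*x)
    (hs₀ : s₀^2 = a^2 + c₀*x) (h : a + s ≠ 0) (h₀ : a + s₀ ≠ 0) (hss₀ : s + s₀ ≠ 0) :
    x / (a + s₀) - x / (a + s) = (c - c₀) * x^2 / ((s + s₀) * (a + s) * (a + s₀)) := by
  field_simp
  linear_combination x * (hs - hs₀)

lemma sq_one_sub_le_cipDiscr {t γ : ℝ} (hγ : -1/6 ≤ γ) : (1 - t^2/6)^2 ≤ cipDiscr t γ := by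
  unfold cipDiscr
  nlinarith [sq_nonneg t]

lemma one_sub_le_sqrt_cipDiscr {t γ : ℝ} (hγ : -1/6 ≤ γ) : 1 - t^2/6 ≤ √(cipDiscr t γ) :=
  Real.le_sqrt_of_sq_le (sq_one_sub_le_cipDiscr hγ)

lemma sq_sqrt_cipDiscr {t γ : ℝ} (hγ : -1/6 ≤ γ) :
    √(cipDiscr t γ) ^ 2 = (1 + t^2/6)^2 + 4*γ*t^2 :=
  Real.sq_sqrt ((sq_nonneg _).trans (sq_one_sub_le_cipDiscr hγ))

lemma cipRoot_eq {t γ : ℝ} (hγ : -1/6 ≤ γ) (hγ0 : γ ≠ 0) :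
    cipRoot t γ = 1 - t^2 / ((1 + t^2/6) + √(cipDiscr t γ)) := by
  have hc : 4*γ ≠ 0 := by simpa using hγ0
  have hx : 0 ≤ (1 + t^2/6)^2 + 4*γ*t^2 := (sq_nonneg _).trans (sq_one_sub_le_cipDiscr hγ)
  rw [cipRoot, cipDiscr, add_assoc, add_sub_assoc, add_div, div_self hc,
    sub_sqrt_div_eq_neg_div_add_sqrt (by positivity) hc hx, neg_div, ← sub_eq_add_neg]

theorem dispersion_root_lipschitz_in_parameter :
    ∃ C : ℝ, 0 < C ∧ ∀ t γ γ₀ : ℝ, 0 < t → t ≤ 1 →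
      -1/6 ≤ γ → γ ≤ 1/6 → γ ≠ 0 →
      -1/6 ≤ γ₀ → γ₀ ≤ 1/6 → γ₀ ≠ 0 →
      |(4*γ + 1 + t^2/6 - Real.sqrt ((1 + t^2/6)^2 + 4*γ*t^2)) / (4*γ)
        - (4*γ₀ + 1 + t^2/6 - Real.sqrt ((1 + t^2/6)^2 + 4*γ₀*t^2)) / (4*γ₀)|
        ≤ C * |γ - γ₀| * t^4 := by
  refine ⟨4, by norm_num, fun t γ γ₀ ht ht₁ hγ _ hγ0 hγ₀ _ hγ₀0 => ?_⟩
  change |cipRoot t γ - cipRoot t γ₀| ≤ _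
  have hs := one_sub_le_sqrt_cipDiscr (t := t) hγ
  have hs₀ := one_sub_le_sqrt_cipDiscr (t := t) hγ₀
  have ht₂ : t^2 ≤ 1 := by nlinarith
  have hden₁ : 1 ≤ √(cipDiscr t γ) + √(cipDiscr t γ₀) := by linarith
  have hden₂ : 1 ≤ (1 + t^2/6) + √(cipDiscr t γ) := by linarith [Real.sqrt_nonneg (cipDiscr t γ)]
  have hden₃ : 1 ≤ (1 + t^2/6) + √(cipDiscr t γ₀) := by
    linarith [Real.sqrt_nonneg (cipDiscr t γ₀)]
  have hden : 1 ≤ (√(cipDiscr t γ) + √(cipDiscr t γ₀)) * ((1 + t^2/6) + √(cipDiscr t γ))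
      * ((1 + t^2/6) + √(cipDiscr t γ₀)) :=
    one_le_mul_of_one_le_of_one_le (one_le_mul_of_one_le_of_one_le hden₁ hden₂) hden₃
  rw [cipRoot_eq hγ hγ0, cipRoot_eq hγ₀ hγ₀0, sub_sub_sub_cancel_left,
    div_add_sub_div_add_of_sq_eq (c := 4*γ) (c₀ := 4*γ₀)
      (sq_sqrt_cipDiscr hγ) (sq_sqrt_cipDiscr hγ₀)
      (by positivity) (by positivity) (by positivity),
    abs_div, abs_of_pos (one_pos.trans_le hden), div_le_iff₀ (one_pos.trans_le hden)]
  calc |(4*γ - 4*γ₀) * (t^2)^2| = 4 * |γ - γ₀| * t^4 := by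
        rw [← mul_sub, abs_mul, abs_mul, abs_of_pos four_pos,
          abs_of_nonneg (pow_nonneg (sq_nonneg t) 2)]
        ring
    _ ≤ _ := le_mul_of_one_le_right (by positivity) hden
end
end

section
/- Let 0 < t ≤ 1 and |γ| ≤ 1/6 with γ ≠ 0, and define cos t_h⁺ = (4γ + 1 + t²/6 + √((1+t²/6)² + 4γt²))/(4γ). Then |cos t_h⁺ - 1| ≥ 3. -/
theorem evanescent_root_far_from_one
    (t γ : ℝ) (ht0 : 0 < t) (ht1 : t ≤ 1) (hγ : |γ| ≤ 1/6) (hγ0 : γ ≠ 0) :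
    |(4*γ + 1 + t^2/6 + Real.sqrt ((1 + t^2/6)^2 + 4*γ*t^2)) / (4*γ) - 1| ≥ 3 := by
  have hγab := abs_le.mp hγ
  have hγpos : (0:ℝ) < |γ| := abs_pos.mpr hγ0
  have ht2 : t^2 ≤ 1 := by nlinarith
  have hD : (1 - t^2/6)^2 ≤ (1 + t^2/6)^2 + 4*γ*t^2 := by nlinarith [sq_nonneg t]
  have h1 : (0:ℝ) ≤ 1 - t^2/6 := by nlinarith
  have hsqrt : 1 - t^2/6 ≤ Real.sqrt ((1 + t^2/6)^2 + 4*γ*t^2) := by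
    calc 1 - t^2/6 = Real.sqrt ((1 - t^2/6)^2) := (Real.sqrt_sq h1).symm
      _ ≤ _ := Real.sqrt_le_sqrt hD
  have hnum : 2 ≤ 1 + t^2/6 + Real.sqrt ((1 + t^2/6)^2 + 4*γ*t^2) := by linarith
  have key : (4*γ + 1 + t^2/6 + Real.sqrt ((1 + t^2/6)^2 + 4*γ*t^2)) / (4*γ) - 1
      = (1 + t^2/6 + Real.sqrt ((1 + t^2/6)^2 + 4*γ*t^2)) / (4*γ) := by
    field_simp
    ring
  rw [key, ge_iff_le, abs_div]
  have h4 : |4*γ| = 4*|γ| := by rw [abs_mul]; norm_num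
  rw [h4, abs_of_nonneg (by linarith : (0:ℝ) ≤ 1 + t^2/6 + Real.sqrt ((1 + t^2/6)^2 + 4*γ*t^2))]
  rw [le_div_iff₀ (by positivity)]
  nlinarith
end

section
/- Let t ∈ (0,1], |γ| ≤ 1/6, η₁ = e^{-it_h⁻}, η₂ = e^{it_h⁻} with t_h⁻ the propagating discrete normalized wavenumber, and for i = 1,2 set a_i = (η_i⁻¹ - 2 + η_i)η_iⁿ and b_i = (1 - t²/3 - (1+t²/6)η_i⁻¹ + γ(1-η_i⁻¹)² - it)η_iⁿ. Then |a₁b₂ - a₂b₁| = |t²(η₁ - η₂)| ≤ 2t². -/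
theorem determinant_combination_estimate
    (t γ th : ℝ) (n : ℕ) (ht0 : 0 < t) (ht1 : t ≤ 1) (hγ : |γ| ≤ 1/6)
    (hdisp : 2*γ*(Real.cos th)^2 - (4*γ + 1 + t^2/6)*(Real.cos th)
      + 2*γ + 1 - t^2/3 = 0)
    (η₁ η₂ a₁ a₂ b₁ b₂ : ℂ)
    (hη₁ : η₁ = Complex.exp (-(th:ℂ)*Complex.I))
    (hη₂ : η₂ = Complex.exp ((th:ℂ)*Complex.I))
    (ha₁ : a₁ = (η₁⁻¹ - 2 + η₁)*η₁^n)
    (ha₂ : a₂ = (η₂⁻¹ - 2 + η₂)*η₂^n)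
    (hb₁ : b₁ = (1 - (t:ℂ)^2/3 - (1 + (t:ℂ)^2/6)*η₁⁻¹ + (γ:ℂ)*(1 - η₁⁻¹)^2
      - Complex.I*(t:ℂ))*η₁^n)
    (hb₂ : b₂ = (1 - (t:ℂ)^2/3 - (1 + (t:ℂ)^2/6)*η₂⁻¹ + (γ:ℂ)*(1 - η₂⁻¹)^2
      - Complex.I*(t:ℂ))*η₂^n) :
    ‖a₁*b₂ - a₂*b₁‖ = ‖(t:ℂ)^2*(η₁ - η₂)‖ ∧ ‖a₁*b₂ - a₂*b₁‖ ≤ 2*t^2 := by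
  have hmul : η₁ * η₂ = 1 := by
    rw [hη₁, hη₂, ← Complex.exp_add]
    ring_nf
    exact Complex.exp_zero
  have hinv1 : η₁⁻¹ = η₂ := inv_eq_of_mul_eq_one_right hmul
  have hinv2 : η₂⁻¹ = η₁ := inv_eq_of_mul_eq_one_left hmul
  have hpow : η₁^n * η₂^n = 1 := by rw [← mul_pow, hmul, one_pow]
  have hsum : η₁ + η₂ = 2 * (Real.cos th : ℂ) := by
    rw [hη₁, hη₂]
    have h1 : -(th:ℂ)*Complex.I = ((-th:ℝ):ℂ)*Complex.I := by push_cast; ring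
    rw [h1, Complex.exp_mul_I, Complex.exp_mul_I, ← Complex.ofReal_cos,
      ← Complex.ofReal_sin, ← Complex.ofReal_cos, ← Complex.ofReal_sin,
      Real.cos_neg, Real.sin_neg]
    push_cast
    ring
  have hdispC : 2*(γ:ℂ)*((Real.cos th : ℂ))^2 - (4*(γ:ℂ) + 1 + (t:ℂ)^2/6)*((Real.cos th:ℂ))
      + 2*(γ:ℂ) + 1 - (t:ℂ)^2/3 = 0 := by
    exact_mod_cast congrArg (Complex.ofReal) hdisp
  have hkey : (2*((Real.cos th:ℂ)) - 2) * ((γ:ℂ)*(2*((Real.cos th:ℂ)) - 2) - (1+(t:ℂ)^2/6))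
      = (t:ℂ)^2 := by linear_combination (2:ℂ)*hdispC
  have expand : a₁*b₂ - a₂*b₁ = (η₁^n*η₂^n) * ((η₁+η₂-2) *
      ((η₁-η₂)*((γ:ℂ)*(η₁+η₂-2) - (1+(t:ℂ)^2/6)))) := by
    rw [ha₁, ha₂, hb₁, hb₂, hinv1, hinv2]; ring
  have key : a₁*b₂ - a₂*b₁ = (t:ℂ)^2 * (η₁ - η₂) := by
    rw [expand, hpow, one_mul, hsum]
    linear_combination (η₁-η₂)*hkey
  have hnorm1 : ‖η₁‖ = 1 := by
    rw [hη₁]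
    simp [Complex.norm_exp]
  have hnorm2 : ‖η₂‖ = 1 := by
    rw [hη₂]
    simp [Complex.norm_exp]
  refine ⟨by rw [key], ?_⟩
  rw [key, norm_mul]
  have h1 : ‖(t:ℂ)^2‖ = t^2 := by
    rw [norm_pow, Complex.norm_real, Real.norm_eq_abs, abs_of_pos ht0]
  have h2 : ‖η₁ - η₂‖ ≤ 2 := by
    calc ‖η₁ - η₂‖ ≤ ‖η₁‖ + ‖η₂‖ := norm_sub_le _ _
    _ = 2 := by rw [hnorm1, hnorm2]; norm_num
  rw [h1]
  nlinarith [sq_nonneg t, norm_nonneg (η₁ - η₂)]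
end

section
/- Let 0 < t ≤ 1, 0 < |γ| ≤ 1/6, η₂ = e^{it_h⁻} with cos t_h⁻ = (4γ+1+t²/6 - √((1+t²/6)²+4γt²))/(4γ) and t_h⁻ ∈ (0,π/2), and define b₂ = η₂ⁿ(1 - t²/3 - (1+t²/6)η₂⁻¹ + γ(1-η₂⁻¹)² - it). Then |b₂| < t²/3. -/
/-! Write η₂ = e^{iθ} and s = 1 - cos θ. Squaring away the root in the formula for cos θ gives
the dispersion relation t² = 2s(1 + t²/6 + 2γs), whence 2s ≤ t². By it the real part of
b₂ η₂⁻ⁿ collapses to -2γs, of size at most t²/6, while its imaginary part is a - t with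
a = sin θ (1 + t²/6 + 2γs) ≥ 0 and a² - t² = (t²/2)(4γs - t²/6) = O(t⁴); dividing by a + t ≥ t
bounds it by t³/4. Finally t⁴/36 + t⁶/16 < t⁴/9. -/

open Complex

lemma discriminant_nonneg {γ : ℝ} (t : ℝ) (hγ : -(1/6) ≤ γ) :
    0 ≤ (1 + t^2/6)^2 + 4*γ*t^2 := by
  nlinarith [sq_nonneg (1 - t^2/6), sq_nonneg t]

lemma dispersion_relation {t γ s : ℝ} (hγ0 : γ ≠ 0)
    (hD : 0 ≤ (1 + t^2/6)^2 + 4*γ*t^2)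
    (hcos : 1 - s = (4*γ + 1 + t^2/6 - Real.sqrt ((1 + t^2/6)^2 + 4*γ*t^2)) / (4*γ)) :
    t^2 = 2*s*(1 + t^2/6 + 2*γ*s) := by
  have hroot : Real.sqrt ((1 + t^2/6)^2 + 4*γ*t^2) = 1 + t^2/6 + 4*γ*s := by
    rw [eq_div_iff (by positivity)] at hcos
    linarith
  have hsq := Real.sq_sqrt hD
  rw [hroot] at hsq
  have hfactor : 4*γ*(t^2 - 2*s*(1 + t^2/6 + 2*γ*s)) = 0 := by linear_combination -hsq
  exact sub_eq_zero.mp ((mul_eq_zero.mp hfactor).resolve_left (by positivity))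

lemma two_mul_le_sq_of_dispersion {t γ s : ℝ} (hγ : -(1/6) ≤ γ) (hs : s < 3)
    (hdisp : t^2 = 2*s*(1 + t^2/6 + 2*γ*s)) : 2*s ≤ t^2 := by
  have hprod : (t^2 - 2*s)*(1 - s/3) = 4*s^2*(γ + 1/6) := by linear_combination hdisp
  have hnonneg : 0 ≤ (t^2 - 2*s)*(1 - s/3) := hprod ▸ mul_nonneg (by positivity) (by linarith)
  nlinarith

lemma abs_sub_le_of_abs_sq_sub_sq_le {a t B : ℝ} (ha : 0 ≤ a) (ht : 0 < t)
    (h : |a^2 - t^2| ≤ B*t) : |a - t| ≤ B := by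
  have hmul : |a - t| * t ≤ B * t := by
    calc |a - t| * t ≤ |a - t| * (a + t) := by gcongr; linarith
      _ = |a^2 - t^2| := by rw [← abs_of_nonneg (by linarith : 0 ≤ a + t), ← abs_mul]; ring_nf
      _ ≤ B * t := h
  exact le_of_mul_le_mul_right hmul ht

lemma exp_mul_I_symbol_eq (t γ θ : ℝ) :
    1 - (t:ℂ)^2/3 - (1 + (t:ℂ)^2/6)*(exp (θ*I))⁻¹ + γ*(1 - (exp (θ*I))⁻¹)^2 - I*t
      = ((1 - t^2/3 - (1 + t^2/6)*Real.cos θ - 2*γ*Real.cos θ*(1 - Real.cos θ) : ℝ) : ℂ)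
        + ((Real.sin θ*(1 + t^2/6 + 2*γ*(1 - Real.cos θ)) - t : ℝ) : ℂ)*I := by
  have hinv : (exp (θ*I))⁻¹ = cos θ - sin θ * I := by
    rw [← exp_neg, show -(θ*I) = -θ*I by ring, exp_mul_I, cos_neg, sin_neg]
    ring
  rw [hinv]
  push_cast
  linear_combination (-(γ:ℂ))*sin_sq_add_cos_sq (θ:ℂ) + (γ:ℂ)*sin (θ:ℂ)^2*I_sq

lemma norm_add_mul_I_lt_of_abs_le {x y t : ℝ} (ht0 : 0 < t) (ht1 : t ≤ 1)
    (hx : |x| ≤ t^2/6) (hy : |y| ≤ t^3/4) : ‖(x:ℂ) + y*I‖ < t^2/3 := by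
  rw [norm_add_mul_I, Real.sqrt_lt' (by positivity)]
  have hx2 : x^2 ≤ (t^2/6)^2 := sq_le_sq' (abs_le.mp hx).1 (abs_le.mp hx).2
  have hy2 : y^2 ≤ (t^3/4)^2 := sq_le_sq' (abs_le.mp hy).1 (abs_le.mp hy).2
  have ht3 : t^3 ≤ t^2 := pow_le_pow_of_le_one ht0.le ht1 (by norm_num)
  have ht3' : (t^3)^2 ≤ (t^2)^2 := pow_le_pow_left₀ (by positivity) ht3 2
  nlinarith [pow_pos ht0 4]

lemma abs_re_symbol_le {t γ s : ℝ} (hγ : |γ| ≤ 1/6) (hs : 0 ≤ s) (h2s : 2*s ≤ t^2)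
    (hdisp : t^2 = 2*s*(1 + t^2/6 + 2*γ*s)) :
    |1 - t^2/3 - (1 + t^2/6)*(1 - s) - 2*γ*(1 - s)*s| ≤ t^2/6 := by
  have hre : 1 - t^2/3 - (1 + t^2/6)*(1 - s) - 2*γ*(1 - s)*s = -(2*γ*s) := by
    linear_combination -hdisp/2
  rw [hre, abs_neg, abs_mul, abs_mul, abs_two, abs_of_nonneg hs]
  nlinarith

lemma abs_im_symbol_le {t γ s σ : ℝ} (ht : 0 < t) (hγ : |γ| ≤ 1/6) (hs : 0 ≤ s)
    (h2s : 2*s ≤ t^2) (hdisp : t^2 = 2*s*(1 + t^2/6 + 2*γ*s))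
    (hσ0 : 0 ≤ σ) (hσ : σ^2 = s*(2 - s)) :
    |σ*(1 + t^2/6 + 2*γ*s) - t| ≤ t^3/4 := by
  set k := 1 + t^2/6 + 2*γ*s
  have hk : 0 < k := pos_of_mul_pos_right (hdisp ▸ by positivity : 0 < 2*s*k) (by positivity)
  apply abs_sub_le_of_abs_sq_sub_sq_le (mul_nonneg hσ0 hk.le) ht
  have hdiff : (σ*k)^2 - t^2 = t^2/2*(4*γ*s - t^2/6) := by
    linear_combination k^2*hσ - (k - (t^2/2 + s*k)/2)*hdisp
  have h4γs : |4*γ*s| ≤ t^2/3 := by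
    rw [abs_mul, abs_mul, abs_of_nonneg hs]
    nlinarith
  have hbracket : |4*γ*s - t^2/6| ≤ t^2/2 := by
    obtain ⟨hlo, hhi⟩ := abs_le.mp h4γs
    exact abs_le.mpr ⟨by linarith, by linarith⟩
  calc |(σ*k)^2 - t^2| = t^2/2*|4*γ*s - t^2/6| := by
        rw [hdiff, abs_mul, abs_of_nonneg (by positivity)]
    _ ≤ t^2/2*(t^2/2) := by gcongr
    _ = t^3/4*t := by ring

theorem b2_smallness_estimate
    (t γ th : ℝ) (n : ℕ) (ht0 : 0 < t) (ht1 : t ≤ 1)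
    (hγ0 : γ ≠ 0) (hγ : |γ| ≤ 1/6)
    (hth : th ∈ Set.Ioo 0 (Real.pi/2))
    (hcos : Real.cos th = (4*γ + 1 + t^2/6
      - Real.sqrt ((1 + t^2/6)^2 + 4*γ*t^2)) / (4*γ))
    (η₂ b₂ : ℂ)
    (hη₂ : η₂ = Complex.exp ((th:ℂ)*Complex.I))
    (hb₂ : b₂ = η₂^n * (1 - (t:ℂ)^2/3 - (1 + (t:ℂ)^2/6)*η₂⁻¹
      + (γ:ℂ)*(1 - η₂⁻¹)^2 - Complex.I*(t:ℂ))) :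
    ‖b₂‖ < t^2/3 := by
  obtain ⟨s, hs⟩ : ∃ s, Real.cos th = 1 - s := ⟨1 - Real.cos th, by ring⟩
  have hs0 : 0 ≤ s := by linarith [Real.cos_le_one th]
  have hsin : 0 ≤ Real.sin th :=
    Real.sin_nonneg_of_nonneg_of_le_pi hth.1.le (by linarith [hth.2, Real.pi_pos])
  have hsin_sq : Real.sin th ^ 2 = s*(2 - s) := by rw [Real.sin_sq, hs]; ring
  rw [hs] at hcos
  have hdisp := dispersion_relation hγ0 (discriminant_nonneg t (abs_le.mp hγ).1) hcos
  have h2s := two_mul_le_sq_of_dispersion (abs_le.mp hγ).1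
    (by linarith [Real.neg_one_le_cos th]) hdisp
  rw [hb₂, norm_mul, norm_pow, hη₂, norm_exp_ofReal_mul_I, one_pow, one_mul,
    exp_mul_I_symbol_eq, hs, sub_sub_cancel]
  exact norm_add_mul_I_lt_of_abs_le ht0 ht1 (abs_re_symbol_le hγ hs0 h2s hdisp)
    (abs_im_symbol_le ht0 hγ hs0 h2s hdisp hsin hsin_sq)
end
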